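/- Let G be a group generated by a finite set X and let 𝓛 ⊆ X* be a regular language (accepted by a finite state automaton with state set 𝓢). Then the image ev(𝓛) of 𝓛 under the evaluation map to G is an r-connected subset of the Cayley graph Γ(G,X) for r = 2|𝓢| + 1: any two elements of ev(𝓛) are joined by an r-path supported in ev(𝓛). -/

import Mathlib

open scoped Pointwise

/-- A positive cone of a group `G`: a subsemigroup `P` such that
`G = P ⊔ P⁻¹ ⊔ {1}` (disjoint union). -/
def IsPositiveCone {G : Type*} [Group G] (P : Set G) : Prop :=
  (∀ a ∈ P, ∀ b ∈ P, a * b ∈ P) ∧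
  (∀ g : G, g ∈ P ∨ g⁻¹ ∈ P ∨ g = 1) ∧
  (∀ g ∈ P, g⁻¹ ∉ P) ∧
  (1 : G) ∉ P

/-- Word length of `g` with respect to the generating set `X`. -/
noncomputable def wordLength {G : Type*} [Group G] (X : Set G) (g : G) : ℕ :=
  sInf {n | ∃ l : List G, (∀ x ∈ l, x ∈ X) ∧ l.length = n ∧ l.prod = g}

/-- Word metric on `G` with respect to `X`. -/
noncomputable def wordDist {G : Type*} [Group G] (X : Set G) (g h : G) : ℕ :=
  wordLength X (g⁻¹ * h)

/-- An `r`-path from `a` to `b` supported in `S` (consecutive word-metric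
distances at most `r`). -/
def IsRPath {G : Type*} [Group G] (X : Set G) (r : ℕ) (S : Set G) (a b : G) : Prop :=
  ∃ l : List G, l ≠ [] ∧ l.head? = some a ∧ l.getLast? = some b ∧
    (∀ x ∈ l, x ∈ S) ∧ l.Chain' (fun u v => wordDist X u v ≤ r)

/-- `S` is `r`-coarsely connected in the Cayley graph `Γ(G,X)`. -/
def CoarselyConnectedWith {G : Type*} [Group G] (X : Set G) (r : ℕ) (S : Set G) : Prop :=
  ∀ a ∈ S, ∀ b ∈ S, IsRPath X r S a b

/-- `X` is a finite symmetric generating set of `G`. -/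
def IsGenSet {G : Type*} [Group G] (X : Set G) : Prop :=
  X.Finite ∧ (∀ x ∈ X, x⁻¹ ∈ X) ∧ Subgroup.closure X = ⊤

/-- A positive cone on a subset `K` of `G` (used for subgroups such as kernels). -/
def IsPositiveConeOn {G : Type*} [Group G] (K P : Set G) : Prop :=
  P ⊆ K ∧ (∀ a ∈ P, ∀ b ∈ P, a * b ∈ P) ∧ (∀ g ∈ K, g ∈ P ∨ g⁻¹ ∈ P ∨ g = 1) ∧
  (∀ g ∈ P, g⁻¹ ∉ P) ∧ (1 : G) ∉ P

/-- The sub-semigroup generated by `S`: nonempty products of elements of `S`. -/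
def SemigroupClosure {G : Type*} [Group G] (S : Set G) : Set G :=
  {g | ∃ l : List G, l ≠ [] ∧ (∀ x ∈ l, x ∈ S) ∧ l.prod = g}


/-!
Fix a word `w₀ ∈ 𝓛` with fewer than `|𝓢|` letters. For an accepted word `u`, walk along its prefixes
from the longest to the empty one, attaching to each prefix `p` a completion `c` with `p c ∈ 𝓛` and
`|c| < |𝓢|`; such a completion exists by pumping down any completion of `p`. The evaluations of
consecutive completed prefixes `p x c` and `p c'` differ by the word `c⁻¹ x⁻¹ c'`, of length at most
`2|𝓢| - 1`, and at the empty prefix the walk can jump to `ev(w₀)`. Joining the walks from `ev(u)`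
and `ev(v)` to `ev(w₀)` connects any two points of `ev(𝓛)`.
-/

namespace DFA

variable {α σ : Type*} (M : DFA α σ)

theorem exists_sublist_length_lt_evalFrom_eq [Fintype σ] (s : σ) (x : List α) :
    ∃ y, y.Sublist x ∧ y.length < Fintype.card σ ∧ M.evalFrom s y = M.evalFrom s x := by
  induction h : x.length using Nat.strong_induction_on generalizing x with
  | _ n ih =>
    by_cases hx : x.length < Fintype.card σ
    · exact ⟨x, List.Sublist.refl x, hx, rfl⟩
    obtain ⟨q, a, b, c, rfl, -, hb, ha, -, hc⟩ := M.evalFrom_split (not_lt.mp hx) rfl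
    have hlt : (a ++ c).length < n := by
      subst h
      simpa [Nat.add_right_comm] using List.length_pos_of_ne_nil hb
    obtain ⟨y, hy, hylen, hyeval⟩ := ih _ hlt (a ++ c) rfl
    refine ⟨y, hy.trans ((List.sublist_append_left a b).append_right c), hylen, ?_⟩
    rw [hyeval, evalFrom_of_append, ha, hc]

def acceptsIn (X : Set α) : Set (List α) :=
  {l | (∀ x ∈ l, x ∈ X) ∧ M.eval l ∈ M.accept}

theorem exists_sublist_append_mem_acceptsIn [Fintype σ] {X : Set α} {u v : List α}
    (h : u ++ v ∈ M.acceptsIn X) :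
    ∃ v', v'.Sublist v ∧ v'.length < Fintype.card σ ∧ u ++ v' ∈ M.acceptsIn X := by
  obtain ⟨hletters, hacc⟩ := h
  obtain ⟨v', hv', hlen, heval⟩ := M.exists_sublist_length_lt_evalFrom_eq (M.eval u) v
  refine ⟨v', hv', hlen, ?_, ?_⟩
  · intro x hx
    rcases List.mem_append.mp hx with hu | hv
    · exact hletters x (List.mem_append_left v hu)
    · exact hletters x (List.mem_append_right u (hv'.subset hv))
  · rw [eval, evalFrom_of_append, ← eval, heval]
    simpa only [eval, evalFrom_of_append] using hacc

end DFA

section WordMetric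

variable {G : Type*} [Group G] {X : Set G}

theorem wordLength_prod_le {l : List G} (hl : ∀ x ∈ l, x ∈ X) : wordLength X l.prod ≤ l.length :=
  Nat.sInf_le ⟨l, hl, rfl, rfl⟩

theorem wordLength_one : wordLength X 1 = 0 :=
  Nat.le_zero.mp (wordLength_prod_le (l := []) (by simp))

theorem mem_of_mem_reverse_map_inv (hX : ∀ x ∈ X, x⁻¹ ∈ X) {l : List G} (hl : ∀ x ∈ l, x ∈ X) :
    ∀ x ∈ (l.map (·⁻¹)).reverse, x ∈ X := by
  simp only [List.mem_reverse, List.mem_map, forall_exists_index, and_imp]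
  rintro _ y hy rfl
  exact hX y (hl y hy)

theorem wordLength_inv (hX : ∀ x ∈ X, x⁻¹ ∈ X) (g : G) : wordLength X g⁻¹ = wordLength X g := by
  have inv_word : ∀ (g : G) (n : ℕ),
      (∃ l : List G, (∀ x ∈ l, x ∈ X) ∧ l.length = n ∧ l.prod = g) →
      ∃ l : List G, (∀ x ∈ l, x ∈ X) ∧ l.length = n ∧ l.prod = g⁻¹ := by
    rintro g n ⟨l, hl, rfl, rfl⟩
    exact ⟨(l.map (·⁻¹)).reverse, mem_of_mem_reverse_map_inv hX hl, by simp,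
      (List.prod_inv_reverse l).symm⟩
  unfold wordLength
  congr 1
  ext n
  exact ⟨fun h => inv_inv g ▸ inv_word g⁻¹ n h, inv_word g n⟩

theorem wordDist_self (g : G) : wordDist X g g = 0 := by
  rw [wordDist, inv_mul_cancel, wordLength_one]

theorem wordDist_comm (hX : ∀ x ∈ X, x⁻¹ ∈ X) (g h : G) : wordDist X g h = wordDist X h g := by
  rw [wordDist, wordDist, ← wordLength_inv hX, mul_inv_rev, inv_inv]

theorem wordDist_mul_left (g a b : G) : wordDist X (g * a) (g * b) = wordDist X a b := by
  simp [wordDist, mul_assoc]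

theorem wordDist_prod_le (hX : ∀ x ∈ X, x⁻¹ ∈ X) {l m : List G} (hl : ∀ x ∈ l, x ∈ X)
    (hm : ∀ x ∈ m, x ∈ X) : wordDist X l.prod m.prod ≤ l.length + m.length := by
  have hprod : l.prod⁻¹ * m.prod = ((l.map (·⁻¹)).reverse ++ m).prod := by
    rw [List.prod_append, List.prod_inv_reverse]
  have hword : ∀ x ∈ (l.map (·⁻¹)).reverse ++ m, x ∈ X := by
    intro x hx
    rcases List.mem_append.mp hx with h | h
    · exact mem_of_mem_reverse_map_inv hX hl x h
    · exact hm x h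
  calc wordDist X l.prod m.prod = wordLength X ((l.map (·⁻¹)).reverse ++ m).prod := by
        rw [wordDist, hprod]
    _ ≤ _ := wordLength_prod_le hword
    _ = l.length + m.length := by simp

theorem wordDist_prod_append_le (hX : ∀ x ∈ X, x⁻¹ ∈ X) (u : List G) {v w : List G}
    (hv : ∀ x ∈ v, x ∈ X) (hw : ∀ x ∈ w, x ∈ X) :
    wordDist X (u ++ v).prod (u ++ w).prod ≤ v.length + w.length := by
  rw [List.prod_append, List.prod_append, wordDist_mul_left]
  exact wordDist_prod_le hX hv hw

end WordMetric

namespace IsRPath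

variable {G : Type*} [Group G] {X : Set G} {r : ℕ} {S : Set G} {a b c : G}

theorem refl (ha : a ∈ S) : IsRPath X r S a a :=
  ⟨[a], List.cons_ne_nil a [], rfl, rfl, by simpa using ha, List.isChain_singleton a⟩

theorem cons (ha : a ∈ S) (hab : wordDist X a b ≤ r) (h : IsRPath X r S b c) :
    IsRPath X r S a c := by
  obtain ⟨l, hne, hhead, hlast, hmem, hchain⟩ := h
  refine ⟨a :: l, List.cons_ne_nil a l, rfl, ?_, ?_, ?_⟩
  · rw [List.getLast?_cons, hlast]
    rfl
  · exact List.forall_mem_cons.mpr ⟨ha, hmem⟩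
  · exact List.isChain_cons.mpr ⟨by simpa [hhead] using hab, hchain⟩

theorem trans (h₁ : IsRPath X r S a b) (h₂ : IsRPath X r S b c) : IsRPath X r S a c := by
  obtain ⟨l₁, hne₁, hhead₁, hlast₁, hmem₁, hchain₁⟩ := h₁
  obtain ⟨l₂, hne₂, hhead₂, hlast₂, hmem₂, hchain₂⟩ := h₂
  refine ⟨l₁ ++ l₂, by simp [hne₁], by rwa [List.head?_append_of_ne_nil _ hne₁],
    by rwa [List.getLast?_append_of_ne_nil _ hne₂], ?_, ?_⟩
  · intro x hx
    exact (List.mem_append.mp hx).elim (hmem₁ x) (hmem₂ x)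
  · refine List.isChain_append.mpr ⟨hchain₁, hchain₂, ?_⟩
    rw [hlast₁, hhead₂]
    rintro x hx y hy
    rw [Option.mem_some_iff] at hx hy
    subst hx hy
    rw [wordDist_self]
    exact Nat.zero_le r

theorem symm (hX : ∀ x ∈ X, x⁻¹ ∈ X) (h : IsRPath X r S a b) : IsRPath X r S b a := by
  obtain ⟨l, hne, hhead, hlast, hmem, hchain⟩ := h
  refine ⟨l.reverse, by simpa using hne, by rwa [List.head?_reverse],
    by rwa [List.getLast?_reverse], fun x hx => hmem x (List.mem_reverse.mp hx), ?_⟩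
  exact List.isChain_reverse.mpr (hchain.imp fun x y hxy => (wordDist_comm hX y x).trans_le hxy)

end IsRPath

section RegularLanguage

variable {G : Type*} [Group G] {X : Set G} {σ : Type*} [Fintype σ] (M : DFA G σ)

theorem isRPath_prod_append_of_mem_acceptsIn (hX : ∀ x ∈ X, x⁻¹ ∈ X) {w₀ : List G}
    (hw₀ : w₀ ∈ M.acceptsIn X) (hw₀len : w₀.length < Fintype.card σ) (u : List G) :
    ∀ w : List G, u ++ w ∈ M.acceptsIn X → w.length < Fintype.card σ →
      IsRPath X (2 * Fintype.card σ + 1) (List.prod '' M.acceptsIn X) (u ++ w).prod w₀.prod := by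
  induction u using List.reverseRecOn with
  | nil =>
    intro w hw hwlen
    refine IsRPath.cons ⟨_, hw, rfl⟩ ?_ (IsRPath.refl ⟨w₀, hw₀, rfl⟩)
    calc wordDist X ([] ++ w).prod w₀.prod ≤ w.length + w₀.length :=
          wordDist_prod_le hX hw.1 hw₀.1
      _ ≤ 2 * Fintype.card σ + 1 := by omega
  | append_singleton u x ih =>
    intro w hw hwlen
    have hw' : u ++ x :: w ∈ M.acceptsIn X := by simpa using hw
    obtain ⟨v, hv, hvlen, huv⟩ := M.exists_sublist_append_mem_acceptsIn hw'
    refine IsRPath.cons ⟨_, hw, rfl⟩ ?_ (ih v huv hvlen)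
    have hletters : ∀ y ∈ x :: w, y ∈ X := fun y hy => hw'.1 y (List.mem_append_right u hy)
    calc wordDist X (u ++ [x] ++ w).prod (u ++ v).prod
          = wordDist X (u ++ x :: w).prod (u ++ v).prod := by simp
      _ ≤ (x :: w).length + v.length :=
          wordDist_prod_append_le hX u hletters fun y hy => huv.1 y (List.mem_append_right u hy)
      _ ≤ 2 * Fintype.card σ + 1 := by simp only [List.length_cons]; omega

theorem coarselyConnectedWith_image_prod_acceptsIn (hX : ∀ x ∈ X, x⁻¹ ∈ X) :
    CoarselyConnectedWith X (2 * Fintype.card σ + 1) (List.prod '' M.acceptsIn X) := by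
  rintro _ ⟨u, hu, rfl⟩ _ ⟨v, hv, rfl⟩
  obtain ⟨w₀, -, hw₀len, hw₀⟩ := M.exists_sublist_append_mem_acceptsIn (u := []) hu
  have walk := fun l (hl : l ∈ M.acceptsIn X) =>
    isRPath_prod_append_of_mem_acceptsIn M hX hw₀ hw₀len l [] (by simpa using hl)
      (Fintype.card_pos_iff.mpr ⟨M.start⟩)
  simpa using (walk u hu).trans ((walk v hv).symm hX)

end RegularLanguage

/-- the evaluation in `G` of a regular language over a finite
symmetric generating set `X` is `(2|𝓢|+1)`-connected in the Cayley graph. -/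
theorem stmt_14 {G : Type*} [Group G] (X : Set G) (hX : IsGenSet X)
    (σ : Type) [Fintype σ] (τ : σ → G → σ) (s0 : σ) (acc : Set σ)
    (L : Set (List G))
    (hL : L = {l : List G | (∀ x ∈ l, x ∈ X) ∧ l.foldl τ s0 ∈ acc}) :
    CoarselyConnectedWith X (2 * Fintype.card σ + 1)
      {g : G | ∃ l ∈ L, l.prod = g} := by
  subst hL
  exact coarselyConnectedWith_image_prod_acceptsIn ⟨τ, s0, acc⟩ hX.2.1
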